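/- The comparability graph of a finite partially ordered set contains no induced cycle of odd length greater than three. -/

import Mathlib

open Finsupp

noncomputable section

/-- An abstract simplicial complex on vertex set `V`: a downward-closed
family of finite subsets of `V`. -/
structure AbsSimplicialComplex (V : Type) where
  faces : Set (Finset V)
  down_closed : ∀ s ∈ faces, ∀ t ⊆ s, t ∈ faces

namespace AbsSimplicialComplex

variable {V : Type} [DecidableEq V]

/-- An (ordered) `n`-simplex of `K`: an injective `(n+1)`-tuple of vertices
whose image is a face of `K`. -/
def Simplex (K : AbsSimplicialComplex V) (n : ℕ) : Type :=
  {f : Fin (n + 1) ↪ V // Finset.univ.image f ∈ K.faces}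

/-- The group of simplicial `n`-chains with integer coefficients. -/
def Chains (K : AbsSimplicialComplex V) (n : ℕ) : Type :=
  K.Simplex n →₀ ℤ

instance (K : AbsSimplicialComplex V) (n : ℕ) : AddCommGroup (K.Chains n) :=
  inferInstanceAs (AddCommGroup (K.Simplex n →₀ ℤ))

/-- The `i`-th face of an `(n+1)`-simplex: delete the `i`-th vertex. -/
def face (K : AbsSimplicialComplex V) {n : ℕ} (i : Fin (n + 2)) (f : K.Simplex (n + 1)) :
    K.Simplex n :=
  ⟨(i.succAboveEmb).trans f.1, by
    refine K.down_closed _ f.2 _ ?_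
    intro x hx
    simp only [Finset.mem_image, Finset.mem_univ, true_and,
      Function.Embedding.trans_apply] at hx ⊢
    obtain ⟨j, hj⟩ := hx
    exact ⟨_, hj⟩⟩

/-- The simplicial boundary map `C_{n+1} → C_n`. -/
def boundary (K : AbsSimplicialComplex V) (n : ℕ) : K.Chains (n + 1) →+ K.Chains n :=
  Finsupp.liftAddHom fun f =>
    zmultiplesHom _ (∑ i : Fin (n + 2), ((-1 : ℤ) ^ (i : ℕ)) • Finsupp.single (K.face i f) 1)

/-- The augmentation map `C_0 → ℤ`. -/
def augmentation (K : AbsSimplicialComplex V) : K.Chains 0 →+ ℤ :=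
  Finsupp.liftAddHom fun _ => AddMonoidHom.id ℤ

/-- Simplicial homology in degree `n+1` with integer coefficients. -/
def Hsucc (K : AbsSimplicialComplex V) (n : ℕ) : Type :=
  (K.boundary n).ker ⧸ ((K.boundary (n + 1)).range.addSubgroupOf (K.boundary n).ker)

instance (K : AbsSimplicialComplex V) (n : ℕ) : AddCommGroup (K.Hsucc n) :=
  inferInstanceAs (AddCommGroup (_ ⧸ _))

/-- The first simplicial homology group with integer coefficients. -/
def H1 (K : AbsSimplicialComplex V) : Type := K.Hsucc 0

instance (K : AbsSimplicialComplex V) : AddCommGroup K.H1 :=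
  inferInstanceAs (AddCommGroup (K.Hsucc 0))

/-- The zeroth simplicial homology group with integer coefficients. -/
def H0 (K : AbsSimplicialComplex V) : Type :=
  K.Chains 0 ⧸ (K.boundary 0).range

instance (K : AbsSimplicialComplex V) : AddCommGroup K.H0 :=
  inferInstanceAs (AddCommGroup (_ ⧸ _))

/-- The reduced zeroth simplicial homology group with integer coefficients. -/
def reducedH0 (K : AbsSimplicialComplex V) : Type :=
  K.augmentation.ker ⧸ ((K.boundary 0).range.addSubgroupOf K.augmentation.ker)

instance (K : AbsSimplicialComplex V) : AddCommGroup K.reducedH0 :=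
  inferInstanceAs (AddCommGroup (_ ⧸ _))

/-- The geometric realization of an abstract simplicial complex, as a
subspace of the product `V → ℝ`. -/
def realization (K : AbsSimplicialComplex V) : Type :=
  {g : V → ℝ // (∀ v, 0 ≤ g v) ∧ (∑ᶠ v, g v) = 1 ∧ ∃ s ∈ K.faces, Function.support g = ↑s}

instance (K : AbsSimplicialComplex V) : TopologicalSpace K.realization :=
  inferInstanceAs (TopologicalSpace {g : V → ℝ // _})

end AbsSimplicialComplex

/-- An abelian group has torsion if it contains a nonzero element of finite order. -/
def HasTorsion (A : Type) [AddCommGroup A] : Prop :=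
  ∃ a : A, a ≠ 0 ∧ IsOfFinAddOrder a

/-- The clique complex (flag complex) of a simple graph: faces are the cliques. -/
def SimpleGraph.cliqueComplex {V : Type} (G : SimpleGraph V) : AbsSimplicialComplex V where
  faces := {s | G.IsClique ↑s}
  down_closed := fun _ hs _ hts => hs.subset (Finset.coe_subset.2 hts)

/-- The independence complex of a simple graph: faces are the independent sets. -/
def SimpleGraph.indComplex {V : Type} (G : SimpleGraph V) : AbsSimplicialComplex V where
  faces := {s | ∀ x ∈ s, ∀ y ∈ s, x ≠ y → ¬ G.Adj x y}
  down_closed := fun _ hs t hts => fun x hx y hy => hs x (hts hx) y (hts hy)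

/-- The comparability graph of a partial order: edges join comparable distinct elements. -/
def comparabilityGraph (P : Type) [PartialOrder P] : SimpleGraph P where
  Adj x y := x ≠ y ∧ (x ≤ y ∨ y ≤ x)
  symm := ⟨fun x y h => ⟨h.1.symm, h.2.symm⟩⟩
  loopless := ⟨fun x h => h.1 rfl⟩

/-- The order complex of a partial order: faces are the chains. -/
def orderComplex (P : Type) [PartialOrder P] : AbsSimplicialComplex P where
  faces := {s | IsChain (· ≤ ·) (↑s : Set P)}
  down_closed := fun _ hs _ hts => hs.mono (Finset.coe_subset.2 hts)

/-!
Along an induced path `u - v - w` in a comparability graph, `u` and `w` are incomparable, so `v`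
lies either above both or below both. Hence around an induced cycle of length at least four the
edges alternate between ascending and descending, which 2-colours the cycle by the direction of
the edge leaving each vertex. An odd cycle has chromatic number three.
-/

theorem le_iff_le_of_incompRel {α : Type*} [Preorder α] {a b c : α} (hab : a ≤ b ∨ b ≤ a)
    (hbc : b ≤ c ∨ c ≤ b) (hac : IncompRel (· ≤ ·) a c) : a ≤ b ↔ c ≤ b :=
  ⟨fun h => hbc.resolve_left fun h' => hac.1 (h.trans h'),
    fun h => hab.resolve_right fun h' => hac.2 (h.trans h')⟩

namespace SimpleGraph

theorem cycleGraph_adj_add_one {n : ℕ} (i : Fin (n + 2)) : (cycleGraph (n + 2)).Adj i (i + 1) := by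
  simp [cycleGraph_adj]

theorem cycleGraph_ne_add_two {n : ℕ} (i : Fin (n + 3)) : i ≠ i + 2 := by
  rw [ne_eq, left_eq_add, Fin.ext_iff, Fin.val_two, Fin.val_zero]
  omega

theorem cycleGraph_not_adj_add_two {n : ℕ} (i : Fin (n + 4)) :
    ¬ (cycleGraph (n + 4)).Adj i (i + 2) := by
  rw [cycleGraph_adj, sub_add_cancel_left, add_sub_cancel_left, neg_eq_iff_add_eq_zero]
  simp only [Fin.ext_iff, Fin.val_add, Fin.val_one, Fin.val_zero, Fin.val_two]
  rw [Nat.mod_eq_of_lt (by omega)]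
  omega

end SimpleGraph

namespace comparabilityGraph

open SimpleGraph

variable {P : Type} [PartialOrder P]

theorem le_iff_not_le_of_adj_of_adj {u v w : P} (huv : (comparabilityGraph P).Adj u v)
    (hvw : (comparabilityGraph P).Adj v w) (huw : u ≠ w)
    (hnuw : ¬ (comparabilityGraph P).Adj u w) : u ≤ v ↔ ¬ v ≤ w := by
  have hinc : IncompRel (· ≤ ·) u w := not_or.mp (not_and.mp hnuw huw)
  rw [le_iff_le_of_incompRel huv.2 hvw.2 hinc]
  exact ⟨fun hwv hvw' => hvw.1 (le_antisymm hvw' hwv), hvw.2.resolve_left⟩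

theorem le_succ_iff_not_le_succ_succ {n : ℕ} (f : cycleGraph (n + 4) ↪g comparabilityGraph P)
    (i : Fin (n + 4)) : f i ≤ f (i + 1) ↔ ¬ f (i + 1) ≤ f (i + 1 + 1) := by
  have h2 : i + 1 + 1 = i + 2 := by rw [add_assoc]; rfl
  have hvw := f.map_adj_iff.2 (cycleGraph_adj_add_one (i + 1))
  rw [h2] at hvw ⊢
  exact le_iff_not_le_of_adj_of_adj (f.map_adj_iff.2 (cycleGraph_adj_add_one i)) hvw
    (f.injective.ne (cycleGraph_ne_add_two i)) (f.map_adj_iff.not.2 (cycleGraph_not_adj_add_two i))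

theorem cycleGraph_colorable_two_of_embedding {n : ℕ}
    (f : cycleGraph (n + 4) ↪g comparabilityGraph P) : (cycleGraph (n + 4)).Colorable 2 := by
  refine Fintype.card_prop ▸ (Coloring.mk (fun i => f i ≤ f (i + 1)) ?_).colorable
  intro u v huv hcol
  rcases cycleGraph_adj.1 huv with h | h
  · obtain rfl := sub_eq_iff_eq_add'.1 h
    have halt := le_succ_iff_not_le_succ_succ f v
    rw [← hcol] at halt
    exact iff_not_self halt
  · obtain rfl := sub_eq_iff_eq_add'.1 h
    have halt := le_succ_iff_not_le_succ_succ f u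
    rw [hcol] at halt
    exact iff_not_self halt

end comparabilityGraph

theorem stmt5_general {P : Type} [PartialOrder P] (k : ℕ)
    (hodd : Odd k) (hk : 3 < k) :
    IsEmpty (SimpleGraph.cycleGraph k ↪g comparabilityGraph P) := by
  obtain ⟨n, rfl⟩ : ∃ n, k = n + 4 := ⟨k - 4, by omega⟩
  refine ⟨fun f => ?_⟩
  have h2 := (comparabilityGraph.cycleGraph_colorable_two_of_embedding f).chromaticNumber_le
  rw [SimpleGraph.chromaticNumber_cycleGraph_of_odd (n + 4) (by omega) hodd] at h2
  norm_num at h2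

/-- the comparability graph of a finite poset has no induced cycle of
odd length greater than three. -/
theorem stmt5 {P : Type} [PartialOrder P] [Fintype P] (k : ℕ)
    (hodd : Odd k) (hk : 3 < k) :
    IsEmpty (SimpleGraph.cycleGraph k ↪g comparabilityGraph P) :=
  stmt5_general k hodd hk
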